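/- arXiv:1607.02552 — 2 statements merged into one kernel-verified Lean document; each statement's English description precedes it below -/
import Mathlib

section
/- Fix a real d with 0 < d ≤ min{Δ₃, Δ₄} and a real w > 2B₀²/d², and an integer time horizon T ≥ 1. Suppose that for every t ∈ {1, …, T} and every channel j an integer sample count m_j(t) ≥ w · ln t is given, and write θ_{j,t}(a) = θ_{j, m_j(t)}(a). Let E_{1,t} be the event that θ_{j,t}(a) ≥ θ_{φ*(a),t}(a) for some a ∈ 𝒜 and some j ≠ φ*(a), and let E_{2,t} be the event that ρ(β, Θ*_t) ≥ ρ(β*, Θ*_t) for some β ∈ 𝓑 with β ≠ β*, where Θ*_t is the matrix with entries Θ*_t(s,a) = θ_{φ*(a),t}(a). Then 𝔼[ Σ_{t=1}^{T} 1_{E_{1,t} ∪ E_{2,t}} ] ≤ 2 A M Σ_{t=1}^{∞} t^{−w d²/(2B₀²)}, and the series on the right converges since w d²/(2B₀²) > 1. -/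
open MeasureTheory ProbabilityTheory

open scoped ENNReal


open Real

private lemma phi_pos {u : ℝ} (hu : |u| ≤ 1) (s : ℝ) : 0 < cosh s + u * sinh s := by
  have h1 : |sinh s| < cosh s := by
    nlinarith [Real.cosh_pos s, Real.cosh_sq s, abs_nonneg (Real.sinh s), sq_abs (Real.sinh s)]
  have h2 : |u * sinh s| ≤ |sinh s| := by
    rw [abs_mul]; exact mul_le_of_le_one_left (abs_nonneg _) hu
  have h3 := neg_abs_le (u * sinh s)
  linarith

private lemma phi_sq_identity (u s : ℝ) :
    (cosh s + u * sinh s) ^ 2 - (sinh s + u * cosh s) ^ 2 = 1 - u ^ 2 := by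
  have h := Real.cosh_sq s
  nlinarith [h]

private lemma key_ineq {u : ℝ} (hu : |u| ≤ 1) (s : ℝ) :
    cosh s + u * sinh s ≤ exp (s * u + s ^ 2 / 2) := by
  set φ : ℝ → ℝ := fun x => cosh x + u * sinh x with hφ
  set ψ : ℝ → ℝ := fun x => sinh x + u * cosh x with hψ
  have hφpos : ∀ x, 0 < φ x := fun x => phi_pos hu x
  have hφd : ∀ x, HasDerivAt φ (ψ x) x := fun x =>
    (Real.hasDerivAt_cosh x).add ((Real.hasDerivAt_sinh x).const_mul u)
  have hψd : ∀ x, HasDerivAt ψ (φ x) x := fun x =>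
    (Real.hasDerivAt_sinh x).add ((Real.hasDerivAt_cosh x).const_mul u)
  -- the first derivative function
  set D : ℝ → ℝ := fun x => u + x - ψ x / φ x with hD
  have hDd : ∀ x, HasDerivAt D (1 - (1 - u ^ 2) / (φ x) ^ 2) x := by
    intro x
    have hdiv : HasDerivAt (fun y => ψ y / φ y)
        ((φ x * φ x - ψ x * ψ x) / (φ x) ^ 2) x :=
      (hψd x).div (hφd x) (hφpos x).ne'
    have h0 : HasDerivAt (fun y => u + y) 1 x := (hasDerivAt_id x).const_add u
    have := h0.sub hdiv
    have hid : φ x * φ x - ψ x * ψ x = 1 - u ^ 2 := by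
      simp only [hφ, hψ]; nlinarith [phi_sq_identity u x]
    rw [← hid]
    exact this
  have hDnonneg : ∀ x, 0 ≤ 1 - (1 - u ^ 2) / (φ x) ^ 2 := by
    intro x
    have hsq : (1 - u ^ 2) ≤ (φ x) ^ 2 := by
      simp only [hφ, hψ]
      nlinarith [phi_sq_identity u x, sq_nonneg (sinh x + u * cosh x)]
    have : (1 - u ^ 2) / (φ x) ^ 2 ≤ 1 :=
      (div_le_one (pow_pos (hφpos x) 2)).mpr hsq
    linarith
  have hDmono : Monotone D :=
    monotone_of_deriv_nonneg (fun x => (hDd x).differentiableAt)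
      (fun x => by rw [(hDd x).deriv]; exact hDnonneg x)
  have hD0 : D 0 = 0 := by
    simp [hD, hψ, hφ, Real.sinh_zero, Real.cosh_zero]
  -- the function g
  set g : ℝ → ℝ := fun x => x * u + x ^ 2 / 2 - Real.log (φ x) with hg
  have hgd : ∀ x, HasDerivAt g (D x) x := by
    intro x
    have h1 : HasDerivAt (fun y : ℝ => y * u) u x := hasDerivAt_mul_const u
    have h2 : HasDerivAt (fun y : ℝ => y ^ 2 / 2) x x := by
      simpa using (hasDerivAt_pow 2 x).div_const 2
    have h3 : HasDerivAt (fun y => Real.log (φ y)) (ψ x / φ x) x :=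
      (hφd x).log (hφpos x).ne'
    exact (h1.add h2).sub h3
  have hgdiff : Differentiable ℝ g := fun x => (hgd x).differentiableAt
  have hg0 : g 0 = 0 := by
    simp [hg, hφ, Real.sinh_zero, Real.cosh_zero]
  have hgnonneg : ∀ x, 0 ≤ g x := by
    intro x
    rcases le_total 0 x with hx | hx
    · have hmono : MonotoneOn g (Set.Ici (0 : ℝ)) := by
        refine monotoneOn_of_deriv_nonneg (convex_Ici 0)
          hgdiff.continuous.continuousOn hgdiff.differentiableOn ?_
        intro y hy
        rw [interior_Ici] at hy
        rw [(hgd y).deriv]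
        have : D 0 ≤ D y := hDmono (le_of_lt hy)
        rw [hD0] at this; exact this
      have := hmono (Set.self_mem_Ici) (Set.mem_Ici.mpr hx) hx
      rw [hg0] at this; exact this
    · have hanti : AntitoneOn g (Set.Iic (0 : ℝ)) := by
        refine antitoneOn_of_deriv_nonpos (convex_Iic 0)
          hgdiff.continuous.continuousOn hgdiff.differentiableOn ?_
        intro y hy
        rw [interior_Iic] at hy
        rw [(hgd y).deriv]
        have : D y ≤ D 0 := hDmono (le_of_lt hy)
        rw [hD0] at this; exact this
      have := hanti (Set.mem_Iic.mpr hx) (Set.self_mem_Iic) hx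
      rw [hg0] at this; exact this
  have hlog : Real.log (φ s) ≤ s * u + s ^ 2 / 2 := by
    have := hgnonneg s; simp only [hg] at this; linarith
  calc φ s = Real.exp (Real.log (φ s)) := (Real.exp_log (hφpos s)).symm
    _ ≤ exp (s * u + s ^ 2 / 2) := Real.exp_le_exp.mpr hlog
open Real MeasureTheory ProbabilityTheory

-- convexity bound: exp(t*w) ≤ cosh(t*r) + (w/r) sinh(t*r) for |w| ≤ r
private lemma exp_le_cosh_add {t r w : ℝ} (hr : 0 < r) (hw : |w| ≤ r) :
    exp (t * w) ≤ cosh (t * r) + (w / r) * sinh (t * r) := by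
  obtain ⟨hw1, hw2⟩ := abs_le.mp hw
  set l : ℝ := (r - w) / (2 * r) with hl
  have hl0 : 0 ≤ l := div_nonneg (by linarith) (by linarith)
  have hl1 : 0 ≤ 1 - l := by
    rw [hl]; rw [sub_nonneg, div_le_one (by positivity)]; linarith
  have hsum : l + (1 - l) = 1 := by ring
  have hcomb : l * (t * (-r)) + (1 - l) * (t * r) = t * w := by
    rw [hl]; field_simp; ring
  have hconv := convexOn_exp.2 (Set.mem_univ (t * (-r))) (Set.mem_univ (t * r))
    hl0 hl1 hsum
  rw [smul_eq_mul, smul_eq_mul, smul_eq_mul, smul_eq_mul, hcomb] at hconv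
  refine hconv.trans (le_of_eq ?_)
  rw [Real.cosh_eq, Real.sinh_eq, hl, mul_neg, Real.exp_neg]
  field_simp
  ring

private lemma hoeffding_mgf {Ω : Type*} [MeasurableSpace Ω] (P : Measure Ω)
    [IsProbabilityMeasure P] (Z : Ω → ℝ) (hZ : Measurable Z) (a b : ℝ)
    (hab : ∀ ω, Z ω ∈ Set.Icc a b) (t : ℝ) :
    ∫ ω, exp (t * (Z ω - ∫ ω', Z ω' ∂P)) ∂P ≤ exp (t ^ 2 * (b - a) ^ 2 / 8) := by
  have hΩ : Nonempty Ω := by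
    by_contra h
    rw [not_nonempty_iff] at h
    have h1 : P Set.univ = 1 := measure_univ
    rw [Set.univ_eq_empty_iff.mpr h, measure_empty] at h1
    exact zero_ne_one h1
  obtain ⟨ω₀⟩ := hΩ
  have hab' : a ≤ b := le_trans (hab ω₀).1 (hab ω₀).2
  -- integrability of Z
  have hZint : Integrable Z P := by
    refine (integrable_const (max |a| |b|)).mono' hZ.aestronglyMeasurable
      (ae_of_all _ fun ω => ?_)
    rw [Real.norm_eq_abs]
    rcases abs_cases (Z ω) with ⟨h1, _⟩ | ⟨h1, _⟩
    · rw [h1]; exact le_max_of_le_right (le_trans (hab ω).2 (le_abs_self b))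
    · rw [h1]; exact le_max_of_le_left (le_trans (neg_le_neg (hab ω).1) (neg_le_abs a))
  set ν : ℝ := ∫ ω', Z ω' ∂P with hν
  have hνmem : a ≤ ν ∧ ν ≤ b := by
    constructor
    · calc a = ∫ _ω', a ∂P := by simp
        _ ≤ ν := integral_mono (integrable_const a) hZint fun ω => (hab ω).1
    · calc ν ≤ ∫ _ω', b ∂P := integral_mono hZint (integrable_const b) fun ω => (hab ω).2
        _ = b := by simp
  rcases eq_or_lt_of_le hab' with heq | hlt
  · -- a = b : Z is constant
    have hZconst : ∀ ω, Z ω = a := fun ω =>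
      le_antisymm (heq ▸ (hab ω).2) (hab ω).1
    have hνa : ν = a := by
      rw [hν]
      have : (fun ω' => Z ω') = fun _ => a := funext hZconst
      rw [this]; simp
    have : (fun ω => exp (t * (Z ω - ν))) = fun _ => 1 := by
      funext ω; rw [hZconst ω, hνa, sub_self, mul_zero, Real.exp_zero]
    rw [this]
    simp only [integral_const, measure_univ, ENNReal.toReal_one, probReal_univ, one_smul, smul_eq_mul,
      one_mul]
    calc (1:ℝ) = exp 0 := Real.exp_zero.symm
      _ ≤ exp (t ^ 2 * (b - a) ^ 2 / 8) := Real.exp_le_exp.mpr (by positivity)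
  · set r : ℝ := (b - a) / 2 with hr
    set c : ℝ := (a + b) / 2 with hc
    have hrpos : 0 < r := by rw [hr]; linarith
    set u : ℝ := (ν - c) / r with hu
    have huabs : |u| ≤ 1 := by
      rw [hu, abs_div, abs_of_pos hrpos, div_le_one hrpos]
      rw [abs_le]; constructor <;> [skip; skip] <;> (rw [hc, hr]) <;>
        [linarith [hνmem.1]; linarith [hνmem.2]]
    set s : ℝ := t * r with hs
    -- pointwise bound
    have hpt : ∀ ω, exp (t * (Z ω - ν)) ≤
        exp (-(s * u)) * (cosh s + ((Z ω - c) / r) * sinh s) := by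
      intro ω
      have h1 : exp (t * (Z ω - ν)) = exp (-(s * u)) * exp (t * (Z ω - c)) := by
        rw [← Real.exp_add]
        congr 1
        rw [hs, hu]
        field_simp
        ring
      rw [h1]
      have h2 : |Z ω - c| ≤ r := by
        rw [abs_le]; constructor <;> (rw [hc, hr]) <;>
          [linarith [(hab ω).1]; linarith [(hab ω).2]]
      have := exp_le_cosh_add (t := t) hrpos h2
      rw [← hs] at this
      exact mul_le_mul_of_nonneg_left this (Real.exp_nonneg _)
  -- integrate the bound
    have hint_lhs : Integrable (fun ω => exp (t * (Z ω - ν))) P := by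
      refine (integrable_const (exp (|t| * (b - a)))).mono'
        ((hZ.sub_const ν).const_mul t).exp.aestronglyMeasurable
        (ae_of_all _ fun ω => ?_)
      rw [Real.norm_eq_abs, Real.abs_exp, Real.exp_le_exp]
      calc t * (Z ω - ν) ≤ |t * (Z ω - ν)| := le_abs_self _
        _ = |t| * |Z ω - ν| := abs_mul _ _
        _ ≤ |t| * (b - a) := by
            refine mul_le_mul_of_nonneg_left ?_ (abs_nonneg t)
            rw [abs_le]; constructor <;> [linarith [(hab ω).1, hνmem.2]; linarith [(hab ω).2, hνmem.1]]
    have hint_rhs : Integrable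
        (fun ω => exp (-(s * u)) * (cosh s + ((Z ω - c) / r) * sinh s)) P := by
      apply Integrable.const_mul
      apply Integrable.add (integrable_const _)
      have : (fun ω => ((Z ω - c) / r) * sinh s)
          = fun ω => (sinh s / r) * (Z ω - c) := by funext ω; field_simp
      rw [this]
      exact ((hZint.sub (integrable_const c)).const_mul _)
    have hintle := integral_mono hint_lhs hint_rhs hpt
    -- compute RHS integral
    have hRHS : ∫ ω, exp (-(s * u)) * (cosh s + ((Z ω - c) / r) * sinh s) ∂P
        = exp (-(s * u)) * (cosh s + u * sinh s) := by
      rw [integral_const_mul]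
      congr 1
      have : (fun ω => cosh s + ((Z ω - c) / r) * sinh s)
          = fun ω => cosh s + (sinh s / r) * (Z ω - c) := by
        funext ω; field_simp
      have hsub : Integrable (fun ω => Z ω - c) P := hZint.sub (integrable_const c)
      have hlin : Integrable (fun ω => sinh s / r * (Z ω - c)) P := hsub.const_mul _
      rw [this, integral_add (integrable_const _) hlin, integral_const,
        integral_const_mul, integral_sub hZint (integrable_const c), integral_const]
      simp only [measure_univ, ENNReal.toReal_one, probReal_univ, one_smul, smul_eq_mul, one_mul]
      rw [← hν, hu]
      field_simp
    rw [hRHS] at hintle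
    refine hintle.trans ?_
    have hkey := key_ineq huabs s
    have : exp (-(s * u)) * (cosh s + u * sinh s)
        ≤ exp (-(s * u)) * exp (s * u + s ^ 2 / 2) :=
      mul_le_mul_of_nonneg_left hkey (Real.exp_nonneg _)
    refine this.trans (le_of_eq ?_)
    rw [← Real.exp_add]
    congr 1
    rw [hs, hr]
    ring

private lemma tail_bound {Ω : Type*} [MeasurableSpace Ω] (P : Measure Ω)
    [IsProbabilityMeasure P] {𝒳 : Type*} [MeasurableSpace 𝒳] {M : ℕ}
    (X : Fin M × ℕ → Ω → 𝒳) (hXmeas : ∀ i, Measurable (X i))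
    (hindep : iIndepFun (m := fun _ => (inferInstance : MeasurableSpace 𝒳)) X P)
    (hident : ∀ (j : Fin M) (k : ℕ), 1 ≤ k → IdentDistrib (X (j, k)) (X (j, 1)) P P)
    (g : 𝒳 → ℝ) (hg : Measurable g) (B₀ : ℝ) (hB₀ : 0 < B₀)
    (hbd : ∀ x y, |g x - g y| ≤ B₀) (j : Fin M) (n : ℕ)
    (ε : ℝ) (hε : 0 < ε) :
    (P {ω | (n : ℝ) * ε ≤ ∑ k ∈ Finset.Icc 1 n,
        (g (X (j, k) ω) - ∫ ω', g (X (j, 1) ω') ∂P)}).toReal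
      ≤ Real.exp (-2 * n * ε ^ 2 / B₀ ^ 2) := by
  have hΩ : Nonempty Ω := by
    by_contra h
    rw [not_nonempty_iff] at h
    have h1 : P Set.univ = 1 := measure_univ
    rw [Set.univ_eq_empty_iff.mpr h, measure_empty] at h1
    exact zero_ne_one h1
  obtain ⟨ω₀⟩ := hΩ
  set x₀ : 𝒳 := X (j, 1) ω₀ with hx₀
  -- bounds on g
  have hbdd : BddBelow (Set.range g) := by
    refine ⟨g x₀ - B₀, ?_⟩
    rintro _ ⟨x, rfl⟩
    have := abs_le.mp (hbd x₀ x)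
    linarith [this.2]
  set I : ℝ := sInf (Set.range g) with hI
  have hIle : ∀ x, I ≤ g x := fun x => csInf_le hbdd (Set.mem_range_self x)
  have hle : ∀ x, g x ≤ I + B₀ := by
    intro x
    have : g x - B₀ ≤ I := by
      refine le_csInf ⟨g x₀, Set.mem_range_self x₀⟩ ?_
      rintro _ ⟨y, rfl⟩
      have := abs_le.mp (hbd x y)
      linarith [this.1]
    linarith
  set μ0 : ℝ := ∫ ω', g (X (j, 1) ω') ∂P with hμ0
  set Y : Fin M × ℕ → Ω → ℝ := fun i ω => g (X i ω) - μ0 with hY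
  have hYmeas : ∀ i, Measurable (Y i) := fun i => (hg.comp (hXmeas i)).sub_const μ0
  have hYindep : iIndepFun (m := fun _ => (inferInstance : MeasurableSpace ℝ)) Y P :=
    hindep.comp (fun _ => fun x => g x - μ0) (fun _ => hg.sub_const μ0)
  -- mean equality
  have hEZ : ∀ k, 1 ≤ k → ∫ ω, g (X (j, k) ω) ∂P = μ0 := by
    intro k hk
    exact ((hident j k hk).comp hg).integral_eq
  -- per-variable mgf bound
  have hmgf : ∀ (t : ℝ) (k : ℕ), 1 ≤ k →
      ProbabilityTheory.mgf (Y (j, k)) P t ≤ Real.exp (t ^ 2 * B₀ ^ 2 / 8) := by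
    intro t k hk
    have hb := hoeffding_mgf P (fun ω => g (X (j, k) ω)) (hg.comp (hXmeas (j, k)))
      I (I + B₀) (fun ω => ⟨hIle _, hle _⟩) t
    rw [hEZ k hk] at hb
    have heq : (I + B₀ - I) ^ 2 = B₀ ^ 2 := by ring_nf
    rw [heq] at hb
    exact hb
  -- the index set
  set emb : ℕ ↪ Fin M × ℕ := ⟨fun k => (j, k), fun a b h => (Prod.ext_iff.mp h).2⟩
    with hemb
  set s : Finset (Fin M × ℕ) := (Finset.Icc 1 n).map emb with hs
  set t₀ : ℝ := 4 * ε / B₀ ^ 2 with ht₀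
  have ht₀pos : 0 < t₀ := by positivity
  -- integrability
  have h_int : ∀ i ∈ s, Integrable (fun ω => Real.exp (t₀ * Y i ω)) P := by
    intro i _
    refine (integrable_const (Real.exp (|t₀| * (|I - μ0| + B₀)))).mono'
      ((hYmeas i).const_mul t₀).exp.aestronglyMeasurable (ae_of_all _ fun ω => ?_)
    rw [Real.norm_eq_abs, Real.abs_exp, Real.exp_le_exp]
    have h1 : |Y i ω| ≤ |I - μ0| + B₀ := by
      rw [hY]
      have h2 := hIle (X i ω)
      have h3 := hle (X i ω)
      rw [abs_le]
      rcases abs_cases (I - μ0) with ⟨h4, _⟩ | ⟨h4, _⟩ <;> constructor <;> simp only <;> linarith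
    calc t₀ * Y i ω ≤ |t₀ * Y i ω| := le_abs_self _
      _ = |t₀| * |Y i ω| := abs_mul _ _
      _ ≤ |t₀| * (|I - μ0| + B₀) := mul_le_mul_of_nonneg_left h1 (abs_nonneg _)
  have h_int_S : Integrable (fun ω => Real.exp (t₀ * (∑ i ∈ s, Y i) ω)) P :=
    hYindep.integrable_exp_mul_sum hYmeas h_int
  -- Chernoff
  have hch := ProbabilityTheory.measure_ge_le_exp_mul_mgf (μ := P)
    (X := ∑ i ∈ s, Y i) ((n : ℝ) * ε) ht₀pos.le h_int_S
  -- identify the set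
  have hset : {ω | (n : ℝ) * ε ≤ (∑ i ∈ s, Y i) ω}
      = {ω | (n : ℝ) * ε ≤ ∑ k ∈ Finset.Icc 1 n, (g (X (j, k) ω) - μ0)} := by
    ext ω
    simp only [Set.mem_setOf_eq, Finset.sum_apply, hs, Finset.sum_map, hemb,
      Function.Embedding.coeFn_mk, hY]
    rfl
  rw [hset] at hch
  refine hch.trans ?_
  -- mgf of the sum
  have hmgfsum : ProbabilityTheory.mgf (∑ i ∈ s, Y i) P t₀
      ≤ Real.exp (t₀ ^ 2 * B₀ ^ 2 / 8) ^ n := by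
    rw [hYindep.mgf_sum hYmeas s]
    rw [hs, Finset.prod_map]
    have hcard : (Finset.Icc 1 n).card = n := by
      rw [Nat.card_Icc]; omega
    calc ∏ k ∈ Finset.Icc 1 n, ProbabilityTheory.mgf (Y (emb k)) P t₀
        ≤ ∏ _k ∈ Finset.Icc 1 n, Real.exp (t₀ ^ 2 * B₀ ^ 2 / 8) := by
          refine Finset.prod_le_prod (fun k _ => ProbabilityTheory.mgf_nonneg) ?_
          intro k hk
          exact hmgf t₀ k (Finset.mem_Icc.mp hk).1
      _ = Real.exp (t₀ ^ 2 * B₀ ^ 2 / 8) ^ n := by rw [Finset.prod_const, hcard]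
  calc Real.exp (-t₀ * ((n : ℝ) * ε)) * ProbabilityTheory.mgf (∑ i ∈ s, Y i) P t₀
      ≤ Real.exp (-t₀ * ((n : ℝ) * ε)) * Real.exp (t₀ ^ 2 * B₀ ^ 2 / 8) ^ n :=
        mul_le_mul_of_nonneg_left hmgfsum (Real.exp_nonneg _)
    _ = Real.exp (-t₀ * ((n : ℝ) * ε) + n * (t₀ ^ 2 * B₀ ^ 2 / 8)) := by
        rw [← Real.exp_nat_mul, ← Real.exp_add]
    _ = Real.exp (-2 * n * ε ^ 2 / B₀ ^ 2) := by
        congr 1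
        rw [ht₀]
        field_simp
        ring


set_option maxHeartbeats 1000000 in
/-- The expected number of exploitation slots in which MC-LPSM makes a non-optimal
channel or power decision, when by each time `t ≤ T` every channel has at least
`w ln t` samples, is at most `2 A M Σ_{t=1}^∞ t^{−w d²/(2B₀²)}`, and this series
converges since `w d²/(2B₀²) > 1`. -/
theorem mc_lpsm_expected_exploitation_failures
    {Ω : Type*} [MeasurableSpace Ω] (Pr : Measure Ω) [IsProbabilityMeasure Pr]
    {𝒳 : Type*} [MeasurableSpace 𝒳]
    (M : ℕ) (hM : 2 ≤ M)
    (X : Fin M × ℕ → Ω → 𝒳) (hXmeas : ∀ i, Measurable (X i))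
    (hindep : iIndepFun (m := fun _ => (inferInstance : MeasurableSpace 𝒳)) X Pr)
    (hident : ∀ (j : Fin M) (k : ℕ), 1 ≤ k →
      IdentDistrib (X (j, k)) (X (j, 1)) Pr Pr)
    {𝒜 : Type*} [Fintype 𝒜] [Nonempty 𝒜]
    (f : 𝒜 → 𝒳 → ℝ) (hfmeas : ∀ a, Measurable (f a))
    (B₀ : ℝ) (hB₀ : 0 < B₀) (hbd : ∀ a x y, |f a x - f a y| ≤ B₀)
    (μ : Fin M → 𝒜 → ℝ) (hμ : ∀ j a, μ j a = ∫ ω, f a (X (j, 1) ω) ∂Pr)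
    (θ : Fin M → ℕ → Ω → 𝒜 → ℝ)
    (hθ : ∀ j m ω a, θ j m ω a = (∑ k ∈ Finset.Icc 1 m, f a (X (j, k) ω)) / m)
    (φs : 𝒜 → Fin M) (hφs : ∀ a j, j ≠ φs a → μ j a < μ (φs a) a)
    (Δ₃ : ℝ) (hΔ₃pos : 0 < Δ₃)
    (hΔ₃ : Δ₃ = ⨅ a : 𝒜, ⨅ j : {j : Fin M // j ≠ φs a},
      (μ (φs a) a - μ (j : Fin M) a))
    {𝒮 : Type*} [Fintype 𝒮] [Nonempty 𝒮]
    (𝓑 : Finset ((𝒮 → 𝒜) × (𝒮 → ℝ)))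
    (hπ : ∀ β ∈ 𝓑, (∀ s, 0 ≤ β.2 s) ∧ ∑ s, β.2 s = 1)
    (ρ : ((𝒮 → 𝒜) × (𝒮 → ℝ)) → (𝒮 → 𝒜 → ℝ) → ℝ)
    (hρ : ∀ β Θ, ρ β Θ = ∑ s, β.2 s * Θ s (β.1 s))
    (βs : (𝒮 → 𝒜) × (𝒮 → ℝ)) (hβs : βs ∈ 𝓑)
    (Δ₄ : ℝ) (hΔ₄ : 0 < Δ₄)
    (hgap : ∀ β ∈ 𝓑, β ≠ βs →
      ρ β (fun _ a => μ (φs a) a) + Δ₄ ≤ ρ βs (fun _ a => μ (φs a) a))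
    (d w : ℝ) (hd0 : 0 < d) (hd : d ≤ min Δ₃ Δ₄) (hw : 2 * B₀ ^ 2 / d ^ 2 < w)
    (T : ℕ) (hT : 1 ≤ T)
    (m : ℕ → Fin M → ℕ)
    (hm : ∀ t ∈ Finset.Icc 1 T, ∀ j, w * Real.log (t : ℝ) ≤ (m t j : ℝ))
    (E₁ E₂ : ℕ → Set Ω)
    (hE₁ : ∀ t, E₁ t = {ω | ∃ a : 𝒜, ∃ j : Fin M, j ≠ φs a ∧
      θ (φs a) (m t (φs a)) ω a ≤ θ j (m t j) ω a})
    (hE₂ : ∀ t, E₂ t = {ω | ∃ β ∈ 𝓑, β ≠ βs ∧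
      ρ βs (fun s a => θ (φs a) (m t (φs a)) ω a) ≤
        ρ β (fun s a => θ (φs a) (m t (φs a)) ω a)}) :
    Summable (fun t : ℕ => ((t : ℝ) + 1) ^ (-(w * d ^ 2) / (2 * B₀ ^ 2))) ∧
      ∫⁻ ω, (∑ t ∈ Finset.Icc 1 T,
          (E₁ t ∪ E₂ t).indicator (fun _ => (1 : ℝ≥0∞)) ω) ∂Pr
        ≤ ENNReal.ofReal (2 * (Fintype.card 𝒜 : ℝ) * (M : ℝ) *
            ∑' t : ℕ, ((t : ℝ) + 1) ^ (-(w * d ^ 2) / (2 * B₀ ^ 2))) := by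
  have hw0 : 0 < w := lt_trans (by positivity) hw
  set q : ℝ := -(w * d ^ 2) / (2 * B₀ ^ 2) with hq
  have hwd : 2 * B₀ ^ 2 < w * d ^ 2 := by
    rw [div_lt_iff₀ (by positivity)] at hw
    linarith
  have hq1 : q < -1 := by
    rw [hq, div_lt_iff₀ (by positivity)]
    linarith
  have hsummable : Summable (fun t : ℕ => ((t : ℝ) + 1) ^ q) := by
    have h1 : Summable (fun n : ℕ => (n : ℝ) ^ q) := Real.summable_nat_rpow.mpr hq1
    have h2 : Summable (fun n : ℕ => ((n + 1 : ℕ) : ℝ) ^ q) :=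
      (summable_nat_add_iff 1).mpr h1
    refine h2.congr fun n => ?_
    push_cast
    ring_nf
  refine ⟨hsummable, ?_⟩
  have hd3 : d ≤ Δ₃ := hd.trans (min_le_left _ _)
  have hd4 : d ≤ Δ₄ := hd.trans (min_le_right _ _)
  -- measurability of θ
  have hθmeas : ∀ (j : Fin M) (n : ℕ) (a : 𝒜), Measurable (fun ω => θ j n ω a) := by
    intro j n a
    have : (fun ω => θ j n ω a)
        = fun ω => (∑ k ∈ Finset.Icc 1 n, f a (X (j, k) ω)) / (n : ℝ) :=
      funext fun ω => hθ j n ω a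
    rw [this]
    exact (Finset.measurable_sum _ fun k _ => (hfmeas a).comp (hXmeas (j, k))).div_const _
  set G : ℕ → Set Ω := fun t => ⋃ a : 𝒜, ⋃ j : Fin M,
    {ω | d / 2 ≤ |θ j (m t j) ω a - μ j a|} with hG
  have hGmeas : ∀ t, MeasurableSet (G t) := by
    intro t
    refine MeasurableSet.iUnion fun a => MeasurableSet.iUnion fun j => ?_
    exact measurableSet_le measurable_const ((hθmeas j (m t j) a).sub_const _).abs
  -- inclusion
  have hsub : ∀ t, E₁ t ∪ E₂ t ⊆ G t := by
    intro t ω hω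
    cases hω with
    | inl h1 =>
      rw [hE₁ t] at h1
      obtain ⟨a, j, hj, hle⟩ := h1
      have hgap3 : d ≤ μ (φs a) a - μ j a := by
        have b1 : BddBelow (Set.range fun j' : {j' : Fin M // j' ≠ φs a} =>
            μ (φs a) a - μ (j' : Fin M) a) := Set.Finite.bddBelow (Set.finite_range _)
        have b2 : BddBelow (Set.range fun a' : 𝒜 =>
            ⨅ j' : {j' : Fin M // j' ≠ φs a'}, (μ (φs a') a' - μ (j' : Fin M) a')) :=
          Set.Finite.bddBelow (Set.finite_range _)
        have h1 : Δ₃ ≤ ⨅ j' : {j' : Fin M // j' ≠ φs a},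
            (μ (φs a) a - μ (j' : Fin M) a) := hΔ₃ ▸ ciInf_le b2 a
        have h2 : (⨅ j' : {j' : Fin M // j' ≠ φs a},
            (μ (φs a) a - μ (j' : Fin M) a)) ≤ μ (φs a) a - μ j a :=
          ciInf_le b1 ⟨j, hj⟩
        linarith
      by_cases hcase : d / 2 ≤ θ j (m t j) ω a - μ j a
      · exact Set.mem_iUnion.mpr ⟨a, Set.mem_iUnion.mpr
          ⟨j, hcase.trans (le_abs_self _)⟩⟩
      · push_neg at hcase
        refine Set.mem_iUnion.mpr ⟨a, Set.mem_iUnion.mpr ⟨φs a, ?_⟩⟩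
        have h3 : d / 2 ≤ -(θ (φs a) (m t (φs a)) ω a - μ (φs a) a) := by linarith
        exact h3.trans (neg_le_abs _)
    | inr h2 =>
      rw [hE₂ t] at h2
      obtain ⟨β, hβ𝓑, hβne, hρle⟩ := h2
      by_contra hnot
      simp only [hG, Set.mem_iUnion, Set.mem_setOf_eq, not_exists, not_le] at hnot
      have key : ∀ β' ∈ 𝓑, |ρ β' (fun _ a => θ (φs a) (m t (φs a)) ω a)
          - ρ β' (fun _ a => μ (φs a) a)| < d / 2 := by
        intro β' hβ'
        obtain ⟨hπ0, hπ1⟩ := hπ β' hβ'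
        rw [hρ, hρ, ← Finset.sum_sub_distrib]
        have hexists : ∃ s0 : 𝒮, 0 < β'.2 s0 := by
          by_contra hno
          push_neg at hno
          have hzero : ∑ s, β'.2 s = 0 :=
            Finset.sum_eq_zero fun s _ => le_antisymm (hno s) (hπ0 s)
          rw [hπ1] at hzero
          exact one_ne_zero hzero
        obtain ⟨s0, hs0⟩ := hexists
        have habs : |∑ s, (β'.2 s * θ (φs (β'.1 s)) (m t (φs (β'.1 s))) ω (β'.1 s)
            - β'.2 s * μ (φs (β'.1 s)) (β'.1 s))|
            ≤ ∑ s, β'.2 s * |θ (φs (β'.1 s)) (m t (φs (β'.1 s))) ω (β'.1 s)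
              - μ (φs (β'.1 s)) (β'.1 s)| := by
          refine (Finset.abs_sum_le_sum_abs _ _).trans (le_of_eq ?_)
          refine Finset.sum_congr rfl fun s _ => ?_
          rw [← mul_sub, abs_mul, abs_of_nonneg (hπ0 s)]
        refine lt_of_le_of_lt habs ?_
        calc ∑ s, β'.2 s * |θ (φs (β'.1 s)) (m t (φs (β'.1 s))) ω (β'.1 s)
              - μ (φs (β'.1 s)) (β'.1 s)|
            < ∑ s : 𝒮, β'.2 s * (d / 2) := by
              refine Finset.sum_lt_sum (fun s _ => ?_) ⟨s0, Finset.mem_univ s0, ?_⟩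
              · exact mul_le_mul_of_nonneg_left
                  (le_of_lt (hnot (β'.1 s) (φs (β'.1 s)))) (hπ0 s)
              · exact mul_lt_mul_of_pos_left (hnot (β'.1 s0) (φs (β'.1 s0))) hs0
          _ = d / 2 := by rw [← Finset.sum_mul, hπ1, one_mul]
      have k1 := abs_lt.mp (key β hβ𝓑)
      have k2 := abs_lt.mp (key βs hβs)
      have k3 := hgap β hβ𝓑 hβne
      have := k1.1; have := k1.2; have := k2.1; have := k2.2
      linarith
  -- per-set measure bound
  have hone : ∀ t ∈ Finset.Icc 1 T, ∀ (a : 𝒜) (j : Fin M),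
      Pr {ω | d / 2 ≤ |θ j (m t j) ω a - μ j a|}
        ≤ ENNReal.ofReal (2 * (t : ℝ) ^ q) := by
    intro t ht a j
    have ht1 : 1 ≤ t := (Finset.mem_Icc.mp ht).1
    rcases eq_or_lt_of_le ht1 with h1 | h2
    · -- t = 1
      have : ((t : ℝ)) = 1 := by rw [← h1]; norm_num
      rw [this, Real.one_rpow, mul_one]
      exact prob_le_one.trans (ENNReal.one_le_ofReal.mpr one_le_two)
    · -- 2 ≤ t
      have htR : (1 : ℝ) < (t : ℝ) := by exact_mod_cast h2
      have hlogpos : 0 < Real.log (t : ℝ) := Real.log_pos htR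
      have hmt := hm t ht j
      have hnpos : (0 : ℝ) < (m t j : ℝ) := lt_of_lt_of_le (by positivity) hmt
      set n := m t j with hn
      have hexp_le : Real.exp (-2 * (n : ℝ) * (d / 2) ^ 2 / B₀ ^ 2) ≤ (t : ℝ) ^ q := by
        rw [Real.rpow_def_of_pos (by linarith : (0 : ℝ) < (t : ℝ))]
        apply Real.exp_le_exp.mpr
        have e1 : -2 * (n : ℝ) * (d / 2) ^ 2 / B₀ ^ 2 = -((n : ℝ) * d ^ 2) / (2 * B₀ ^ 2) := by
          ring
        have e2 : Real.log (t : ℝ) * q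
            = -(w * Real.log (t : ℝ) * d ^ 2) / (2 * B₀ ^ 2) := by
          rw [hq]; ring
        rw [e1, e2]
        apply div_le_div_of_nonneg_right ?_ (by positivity)
        · nlinarith [mul_le_mul_of_nonneg_right hmt (sq_nonneg d)]
      have hsplit : {ω | d / 2 ≤ |θ j n ω a - μ j a|} ⊆
          {ω | d / 2 ≤ θ j n ω a - μ j a} ∪ {ω | d / 2 ≤ -(θ j n ω a - μ j a)} := by
        intro ω hω
        have hω' : d / 2 ≤ |θ j n ω a - μ j a| := hω
        rcases le_abs.mp hω' with h | h
        · exact Set.mem_union_left _ h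
        · exact Set.mem_union_right _ h
      refine le_trans (measure_mono hsplit) ((measure_union_le _ _).trans ?_)
      have hup : Pr {ω | d / 2 ≤ θ j n ω a - μ j a}
          ≤ ENNReal.ofReal ((t : ℝ) ^ q) := by
        have hseteq : {ω | d / 2 ≤ θ j n ω a - μ j a}
            = {ω | (n : ℝ) * (d / 2) ≤ ∑ k ∈ Finset.Icc 1 n,
                (f a (X (j, k) ω) - ∫ ω', f a (X (j, 1) ω') ∂Pr)} := by
          ext ω
          simp only [Set.mem_setOf_eq]
          rw [hθ j n ω a, ← hμ j a]
          have hsum : ∑ k ∈ Finset.Icc 1 n, (f a (X (j, k) ω) - μ j a)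
              = (∑ k ∈ Finset.Icc 1 n, f a (X (j, k) ω)) - (n : ℝ) * μ j a := by
            rw [Finset.sum_sub_distrib, Finset.sum_const, Nat.card_Icc]
            simp [nsmul_eq_mul]
          rw [hsum]
          set S := ∑ k ∈ Finset.Icc 1 n, f a (X (j, k) ω) with hS
          have hiff : d / 2 ≤ S / (n : ℝ) - μ j a ↔ (d / 2 + μ j a) * (n : ℝ) ≤ S := by
            rw [← le_div_iff₀ hnpos]
            constructor <;> intro h <;> linarith
          rw [hiff]
          constructor <;> intro h <;> nlinarith
        rw [hseteq]
        have htb := tail_bound Pr X hXmeas hindep hident (f a) (hfmeas a) B₀ hB₀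
          (hbd a) j n (d / 2) (by positivity)
        rw [← ENNReal.ofReal_toReal (measure_ne_top Pr _)]
        exact ENNReal.ofReal_le_ofReal (htb.trans hexp_le)
      have hlo : Pr {ω | d / 2 ≤ -(θ j n ω a - μ j a)}
          ≤ ENNReal.ofReal ((t : ℝ) ^ q) := by
        have hbd' : ∀ x y, |(fun x => -(f a x)) x - (fun x => -(f a x)) y| ≤ B₀ := by
          intro x y
          have := hbd a y x
          rw [show -(f a x) - -(f a y) = f a y - f a x by ring]
          exact this
        have hseteq : {ω | d / 2 ≤ -(θ j n ω a - μ j a)}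
            = {ω | (n : ℝ) * (d / 2) ≤ ∑ k ∈ Finset.Icc 1 n,
                ((fun x => -(f a x)) (X (j, k) ω)
                  - ∫ ω', (fun x => -(f a x)) (X (j, 1) ω') ∂Pr)} := by
          ext ω
          simp only [Set.mem_setOf_eq]
          rw [hθ j n ω a]
          have hintneg : ∫ ω', -(f a (X (j, 1) ω')) ∂Pr = -(μ j a) := by
            rw [hμ j a, ← integral_neg]
          rw [hintneg]
          have hsum : ∑ k ∈ Finset.Icc 1 n, (-(f a (X (j, k) ω)) - -(μ j a))
              = (n : ℝ) * μ j a - (∑ k ∈ Finset.Icc 1 n, f a (X (j, k) ω)) := by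
            rw [Finset.sum_sub_distrib, Finset.sum_const, Nat.card_Icc, Finset.sum_neg_distrib]
            simp [nsmul_eq_mul]
            ring
          rw [hsum]
          set S := ∑ k ∈ Finset.Icc 1 n, f a (X (j, k) ω) with hS
          have hiff : d / 2 ≤ -(S / (n : ℝ) - μ j a) ↔ S / (n : ℝ) ≤ μ j a - d / 2 := by
            constructor <;> intro h <;> linarith
          rw [hiff, div_le_iff₀ hnpos]
          constructor <;> intro h <;> nlinarith
        rw [hseteq]
        have htb := tail_bound Pr X hXmeas hindep hident (fun x => -(f a x))
          (hfmeas a).neg B₀ hB₀ hbd' j n (d / 2) (by positivity)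
        rw [← ENNReal.ofReal_toReal (measure_ne_top Pr _)]
        exact ENNReal.ofReal_le_ofReal (htb.trans hexp_le)
      calc Pr {ω | d / 2 ≤ θ j n ω a - μ j a}
            + Pr {ω | d / 2 ≤ -(θ j n ω a - μ j a)}
          ≤ ENNReal.ofReal ((t : ℝ) ^ q) + ENNReal.ofReal ((t : ℝ) ^ q) :=
            add_le_add hup hlo
        _ = ENNReal.ofReal (2 * (t : ℝ) ^ q) := by
            rw [← ENNReal.ofReal_add (Real.rpow_nonneg (by positivity) q)
              (Real.rpow_nonneg (by positivity) q)]
            congr 1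
            ring
  -- union bound over a, j
  have hGbound : ∀ t ∈ Finset.Icc 1 T, Pr (G t)
      ≤ ENNReal.ofReal ((Fintype.card 𝒜 : ℝ) * (M : ℝ) * (2 * (t : ℝ) ^ q)) := by
    intro t ht
    have h2q : (0:ℝ) ≤ 2 * (t : ℝ) ^ q := by positivity
    calc Pr (G t) ≤ ∑' a : 𝒜, Pr (⋃ j : Fin M, {ω | d / 2 ≤ |θ j (m t j) ω a - μ j a|}) :=
          measure_iUnion_le _
      _ ≤ ∑' a : 𝒜, ∑' j : Fin M, Pr {ω | d / 2 ≤ |θ j (m t j) ω a - μ j a|} :=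
          ENNReal.tsum_le_tsum fun a => measure_iUnion_le _
      _ ≤ ∑' _a : 𝒜, ∑' _j : Fin M, ENNReal.ofReal (2 * (t : ℝ) ^ q) :=
          ENNReal.tsum_le_tsum fun a => ENNReal.tsum_le_tsum fun j => hone t ht a j
      _ = ENNReal.ofReal ((Fintype.card 𝒜 : ℝ) * (M : ℝ) * (2 * (t : ℝ) ^ q)) := by
          rw [tsum_fintype, tsum_fintype]
          simp only [Finset.sum_const, Finset.card_univ, Fintype.card_fin, smul_smul]
          rw [nsmul_eq_mul]
          rw [← ENNReal.ofReal_natCast (Fintype.card 𝒜 * M)]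
          rw [← ENNReal.ofReal_mul (by positivity)]
          congr 1
          push_cast
          ring
  -- final chain
  calc ∫⁻ ω, (∑ t ∈ Finset.Icc 1 T,
        (E₁ t ∪ E₂ t).indicator (fun _ => (1 : ℝ≥0∞)) ω) ∂Pr
      ≤ ∫⁻ ω, (∑ t ∈ Finset.Icc 1 T,
          (G t).indicator (fun _ => (1 : ℝ≥0∞)) ω) ∂Pr := by
        refine lintegral_mono fun ω => Finset.sum_le_sum fun t _ => ?_
        exact Set.indicator_le_indicator_of_subset (hsub t) (fun _ => zero_le) ω
    _ = ∑ t ∈ Finset.Icc 1 T, Pr (G t) := by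
        rw [lintegral_finset_sum _ fun t _ => measurable_const.indicator (hGmeas t)]
        refine Finset.sum_congr rfl fun t _ => ?_
        rw [lintegral_indicator (hGmeas t)]
        exact setLIntegral_one _
    _ ≤ ∑ t ∈ Finset.Icc 1 T,
        ENNReal.ofReal ((Fintype.card 𝒜 : ℝ) * (M : ℝ) * (2 * (t : ℝ) ^ q)) :=
          Finset.sum_le_sum fun t ht => hGbound t ht
    _ = ENNReal.ofReal (∑ t ∈ Finset.Icc 1 T,
          (Fintype.card 𝒜 : ℝ) * (M : ℝ) * (2 * (t : ℝ) ^ q)) :=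
        (ENNReal.ofReal_sum_of_nonneg fun t _ => by positivity).symm
    _ ≤ ENNReal.ofReal (2 * (Fintype.card 𝒜 : ℝ) * (M : ℝ) *
          ∑' t : ℕ, ((t : ℝ) + 1) ^ q) := by
        apply ENNReal.ofReal_le_ofReal
        have hstep : ∑ t ∈ Finset.Icc 1 T,
            (Fintype.card 𝒜 : ℝ) * (M : ℝ) * (2 * (t : ℝ) ^ q)
            = 2 * (Fintype.card 𝒜 : ℝ) * (M : ℝ)
              * ∑ t ∈ Finset.Icc 1 T, (t : ℝ) ^ q := by
          rw [Finset.mul_sum]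
          exact Finset.sum_congr rfl fun t _ => by ring
        rw [hstep]
        refine mul_le_mul_of_nonneg_left ?_ (by positivity)
        -- sum over Icc 1 T ≤ tsum
        have hIcc : ∑ t ∈ Finset.Icc 1 T, (t : ℝ) ^ q
            = ∑ i ∈ Finset.range T, ((i : ℝ) + 1) ^ q := by
          rw [← Finset.Ico_add_one_right_eq_Icc, Finset.sum_Ico_eq_sum_range]
          simp only [Nat.add_sub_cancel, Nat.succ_sub_one]
          refine Finset.sum_congr rfl fun i _ => ?_
          congr 1
          push_cast
          ring
        rw [hIcc]
        exact Summable.sum_le_tsum (Finset.range T)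
          (fun i _ => Real.rpow_nonneg (by positivity) q) hsummable
end

section
/- Let n₀ ≥ 1 and η ≥ 2 be integers and c = Δ₁²/(2B₀²). Then the expected number of epochs in which Epoch-LPSM finds a non-optimal policy satisfies 𝔼[ Σ_{k=1}^∞ 1_{F_{n₀ η^{k−1}}} ] ≤ (1 + A) S Σ_{k=1}^∞ exp(−c n₀ η^{k−1}), and the series Σ_{k=1}^∞ exp(−c n₀ η^{k−1}) converges. -/
open MeasureTheory ProbabilityTheory

open scoped ENNReal

open Real in
private lemma lemA {p : ℝ} (hp0 : 0 ≤ p) (hp1 : p ≤ 1) (h : ℝ) :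
    1 - p + p * exp h ≤ exp (p * h + h ^ 2 / 8) := by
  set q : ℝ → ℝ := fun x => 1 - p + p * exp x with hq
  set ψ : ℝ → ℝ := fun x => p * x + x ^ 2 / 8 - Real.log (q x) with hψ
  set ψ' : ℝ → ℝ := fun x => p + x / 4 - p * exp x / q x with hψ'
  clear_value q ψ ψ'
  have hqx : ∀ x, q x = 1 - p + p * exp x := fun x => by rw [hq]
  have hqpos : ∀ x, 0 < q x := by
    intro x
    rw [hqx]
    rcases eq_or_lt_of_le hp0 with h0 | h0
    · simp [← h0]
    · nlinarith [exp_pos x]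
  have hqd : ∀ x, HasDerivAt q (p * exp x) x := by
    intro x
    rw [hq]
    simpa using ((Real.hasDerivAt_exp x).const_mul p).const_add (1 - p)
  have hd1 : ∀ x, HasDerivAt ψ (ψ' x) x := by
    intro x
    rw [hψ, hψ']
    have hlog : HasDerivAt (fun y => Real.log (q y)) (p * exp x / q x) x :=
      (hqd x).log (hqpos x).ne'
    have h2 : HasDerivAt (fun y : ℝ => p * y) p x := by
      simpa using (hasDerivAt_id x).const_mul p
    have h1 : HasDerivAt (fun y : ℝ => p * y + y ^ 2 / 8) (p + 2 * x / 8) x := by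
      exact (h2.add ((hasDerivAt_pow 2 x).div_const 8)).congr_deriv (by norm_num)
    have : HasDerivAt (fun y => p * y + y ^ 2 / 8 - Real.log (q y)) (p + 2 * x / 8 - p * exp x / q x) x := h1.sub hlog
    convert this using 1
    ring
  have hd2 : ∀ x, HasDerivAt ψ' (1 / 4 - p * exp x * (1 - p) / (q x) ^ 2) x := by
    intro x
    rw [hψ']
    have hdiv : HasDerivAt (fun y => p * exp y / q y)
        ((p * exp x * q x - p * exp x * (p * exp x)) / (q x) ^ 2) x :=
      ((Real.hasDerivAt_exp x).const_mul p).div (hqd x) (hqpos x).ne'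
    have h1 : HasDerivAt (fun y : ℝ => p + y / 4) (1 / 4) x := by
      simpa using ((hasDerivAt_id x).div_const 4).const_add p
    have : HasDerivAt (fun y => p + y / 4 - p * exp y / q y)
        (1 / 4 - (p * exp x * q x - p * exp x * (p * exp x)) / (q x) ^ 2) x := h1.sub hdiv
    convert this using 1
    have hx := (hqpos x).ne'
    rw [hqx]
    field_simp
    ring_nf
  have hψ'mono : Monotone ψ' := by
    refine monotone_of_deriv_nonneg (fun x => (hd2 x).differentiableAt) ?_
    intro x
    rw [(hd2 x).deriv]
    have h4 : 4 * (p * exp x * (1 - p)) ≤ (q x) ^ 2 := by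
      rw [hqx]
      nlinarith [sq_nonneg (1 - p - p * exp x), exp_pos x]
    have hq2 : (0:ℝ) < (q x) ^ 2 := pow_pos (hqpos x) 2
    rw [sub_nonneg, div_le_iff₀ hq2]
    linarith
  have hψ'0 : ψ' 0 = 0 := by rw [hψ']; simp [hqx 0]
  have hψ0 : ψ 0 = 0 := by rw [hψ]; simp [hqx 0]
  have hψnn : ∀ x, 0 ≤ ψ x := by
    intro x
    rcases lt_trichotomy x 0 with hx | hx | hx
    · obtain ⟨c, hc, hceq⟩ := exists_hasDerivAt_eq_slope ψ ψ' hx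
        (fun y _ => (hd1 y).continuousAt.continuousWithinAt) (fun y _ => hd1 y)
      have hc0 : ψ' c ≤ 0 := by
        have := hψ'mono (le_of_lt hc.2)
        rw [hψ'0] at this; exact this
      have h5 : (ψ 0 - ψ x) / (0 - x) ≤ 0 := hceq ▸ hc0
      have hxpos : (0:ℝ) < 0 - x := by linarith
      have := (div_le_iff₀ hxpos).mp h5
      rw [hψ0] at this
      linarith
    · rw [hx, hψ0]
    · obtain ⟨c, hc, hceq⟩ := exists_hasDerivAt_eq_slope ψ ψ' hx
        (fun y _ => (hd1 y).continuousAt.continuousWithinAt) (fun y _ => hd1 y)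
      have hc0 : 0 ≤ ψ' c := by
        have := hψ'mono (le_of_lt hc.1)
        rw [hψ'0] at this; exact this
      have h5 : 0 ≤ (ψ x - ψ 0) / (x - 0) := hceq ▸ hc0
      have hxpos : (0:ℝ) < x - 0 := by linarith
      have := (le_div_iff₀ hxpos).mp h5
      rw [hψ0] at this
      linarith
  have hx := hψnn h
  rw [hψ] at hx
  simp only at hx
  have hlog : Real.log (q h) ≤ p * h + h ^ 2 / 8 := by linarith
  calc 1 - p + p * exp h = q h := (hqx h).symm
    _ ≤ exp (Real.log (q h)) := le_of_eq (Real.exp_log (hqpos h)).symm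
    _ ≤ exp (p * h + h ^ 2 / 8) := exp_le_exp.mpr hlog

open Real in
private lemma lemB {Ω : Type*} [MeasurableSpace Ω] (Pr : Measure Ω) [IsProbabilityMeasure Pr]
    (Y : Ω → ℝ) (hY : Measurable Y) {a b : ℝ} (hab : ∀ ω, Y ω ∈ Set.Icc a b)
    (hmean : ∫ ω, Y ω ∂Pr = 0) (l : ℝ) :
    mgf Y Pr l ≤ exp (l ^ 2 * (b - a) ^ 2 / 8) := by
  have hne : Nonempty Ω := by
    by_contra hempty
    rw [not_nonempty_iff] at hempty
    have : (Pr Set.univ) = 1 := measure_univ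
    simp [Set.univ_eq_empty_iff.mpr hempty] at this
  obtain ⟨ω₀⟩ := hne
  have hab' : a ≤ b := le_trans (hab ω₀).1 (hab ω₀).2
  have hYint : Integrable Y Pr := by
    refine ⟨hY.aestronglyMeasurable, ?_⟩
    refine HasFiniteIntegral.of_bounded (C := max |a| |b|) (ae_of_all _ fun ω => ?_)
    rw [Real.norm_eq_abs, abs_le]
    constructor
    · have := (hab ω).1
      have h1 : -|a| ≤ a := neg_abs_le a
      have := le_max_left |a| |b|; linarith
    · have := (hab ω).2
      have h1 : b ≤ |b| := le_abs_self b
      have := le_max_right |a| |b|; linarith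
  have ha0 : a ≤ 0 := by
    have : ∫ _ : Ω, a ∂Pr ≤ ∫ ω, Y ω ∂Pr :=
      integral_mono (integrable_const a) hYint fun ω => (hab ω).1
    simpa [hmean] using this
  have hb0 : 0 ≤ b := by
    have : ∫ ω, Y ω ∂Pr ≤ ∫ _ : Ω, b ∂Pr :=
      integral_mono hYint (integrable_const b) fun ω => (hab ω).2
    simpa [hmean] using this
  rcases eq_or_lt_of_le hab' with heq | hlt
  · -- a = b, hence a = 0 = b and Y = 0
    have ha : a = 0 := le_antisymm ha0 (heq ▸ hb0)
    have hYeq : ∀ ω, Y ω = 0 := by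
      intro ω
      have := hab ω
      rw [← heq, ha] at this
      exact le_antisymm this.2 this.1
    have : mgf Y Pr l = 1 := by
      rw [mgf]
      simp [hYeq]
    rw [this]
    rw [← Real.exp_zero]
    apply exp_le_exp.mpr
    positivity
  · have hba : (0:ℝ) < b - a := sub_pos.mpr hlt
    set p : ℝ := -a / (b - a) with hp
    have hp0 : 0 ≤ p := div_nonneg (by linarith) hba.le
    have hp1 : p ≤ 1 := by
      rw [hp, div_le_one hba]; linarith
    -- pointwise convexity bound
    have hpt : ∀ ω, exp (l * Y ω) ≤
        (b - Y ω) / (b - a) * exp (l * a) + (Y ω - a) / (b - a) * exp (l * b) := by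
      intro ω
      have h1 := (hab ω).1
      have h2 := (hab ω).2
      have hu : (0:ℝ) ≤ (b - Y ω) / (b - a) := div_nonneg (by linarith) hba.le
      have hv : (0:ℝ) ≤ (Y ω - a) / (b - a) := div_nonneg (by linarith) hba.le
      have huv : (b - Y ω) / (b - a) + (Y ω - a) / (b - a) = 1 := by
        field_simp
        ring
      have := convexOn_exp.2 (Set.mem_univ (l * a)) (Set.mem_univ (l * b)) hu hv huv
      simp only [smul_eq_mul] at this
      have harg : (b - Y ω) / (b - a) * (l * a) + (Y ω - a) / (b - a) * (l * b)
          = l * Y ω := by field_simp; ring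
      rw [harg] at this
      exact this
    -- integrate
    have hint1 : Integrable (fun ω => exp (l * Y ω)) Pr := by
      refine ⟨(measurable_exp.comp (hY.const_mul l)).aestronglyMeasurable, ?_⟩
      refine HasFiniteIntegral.of_bounded (C := max (exp (l * a)) (exp (l * b)))
        (ae_of_all _ fun ω => ?_)
      rw [Real.norm_eq_abs, abs_of_pos (exp_pos _)]
      rcases le_total l 0 with hl | hl
      · exact le_max_of_le_left (exp_le_exp.mpr
          (mul_le_mul_of_nonpos_left (hab ω).1 hl))
      · exact le_max_of_le_right (exp_le_exp.mpr
          (mul_le_mul_of_nonneg_left (hab ω).2 hl))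
    have hint2 : Integrable
        (fun ω => (b - Y ω) / (b - a) * exp (l * a) + (Y ω - a) / (b - a) * exp (l * b)) Pr := by
      apply Integrable.add
      · exact ((((integrable_const b).sub hYint).div_const (b - a)).mul_const _)
      · exact (((hYint.sub (integrable_const a)).div_const (b - a)).mul_const _)
    have hmgf : mgf Y Pr l ≤ b / (b - a) * exp (l * a) + (-a) / (b - a) * exp (l * b) := by
      rw [mgf]
      calc ∫ ω, exp (l * Y ω) ∂Pr
          ≤ ∫ ω, ((b - Y ω) / (b - a) * exp (l * a) + (Y ω - a) / (b - a) * exp (l * b)) ∂Pr :=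
            integral_mono hint1 hint2 hpt
        _ = b / (b - a) * exp (l * a) + (-a) / (b - a) * exp (l * b) := by
            have e1 : ∀ ω, (b - Y ω) / (b - a) * exp (l * a) + (Y ω - a) / (b - a) * exp (l * b)
                = (b / (b-a) * exp (l*a) + (-a)/(b-a) * exp (l*b))
                  + (exp (l*b)/(b-a) - exp (l*a)/(b-a)) * Y ω := by
              intro ω; field_simp; ring
            simp_rw [e1]
            rw [integral_add (integrable_const _) (hYint.const_mul _),
              integral_const, integral_const_mul, hmean]
            simp
    -- apply lemA with h = l * (b - a)
    have hkey := lemA hp0 hp1 (l * (b - a))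
    have e2 : b / (b - a) * exp (l * a) + (-a) / (b - a) * exp (l * b)
        = exp (l * a) * (1 - p + p * exp (l * (b - a))) := by
      have hE : exp (l * b) = exp (l * a) * exp (l * (b - a)) := by
        rw [← Real.exp_add]; congr 1; ring
      rw [hp, hE]
      field_simp
      ring
    have e3 : exp (l * a) * exp (p * (l * (b - a)) + (l * (b - a)) ^ 2 / 8)
        = exp (l ^ 2 * (b - a) ^ 2 / 8) := by
      rw [← Real.exp_add]
      congr 1
      rw [hp]
      field_simp
      ring
    calc mgf Y Pr l ≤ b / (b - a) * exp (l * a) + (-a) / (b - a) * exp (l * b) := hmgf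
      _ = exp (l * a) * (1 - p + p * exp (l * (b - a))) := e2
      _ ≤ exp (l * a) * exp (p * (l * (b - a)) + (l * (b - a)) ^ 2 / 8) :=
          mul_le_mul_of_nonneg_left hkey (exp_pos _).le
      _ = exp (l ^ 2 * (b - a) ^ 2 / 8) := e3

open Real in
private lemma lemC {Ω 𝒳 : Type*} [MeasurableSpace Ω] [MeasurableSpace 𝒳]
    (Pr : Measure Ω) [IsProbabilityMeasure Pr]
    (X : ℕ → Ω → 𝒳) (hXmeas : ∀ k, Measurable (X k))
    (hindep : iIndepFun X Pr)
    (hident : ∀ k, 1 ≤ k → IdentDistrib (X k) (X 1) Pr Pr)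
    (g : 𝒳 → ℝ) (hg : Measurable g) (B₀ : ℝ) (hB₀ : 0 < B₀)
    (hbd : ∀ x y, |g x - g y| ≤ B₀)
    (m : ℝ) (hm : m = ∫ ω, g (X 1 ω) ∂Pr)
    (t : ℕ) (ε : ℝ) (hε : 0 < ε) :
    Pr {ω | (t : ℝ) * ε ≤ ∑ k ∈ Finset.Icc 1 t, (g (X k ω) - m)}
      ≤ ENNReal.ofReal (exp (-2 * t * ε ^ 2 / B₀ ^ 2)) := by
  have hne : Nonempty Ω := by
    by_contra hempty
    rw [not_nonempty_iff] at hempty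
    have : (Pr Set.univ) = 1 := measure_univ
    simp [Set.univ_eq_empty_iff.mpr hempty] at this
  obtain ⟨ω₀⟩ := hne
  set x₀ : 𝒳 := X 1 ω₀ with hx₀
  -- range bounds
  have hub : ∀ x, g x ≤ g x₀ + B₀ := fun x => by
    have := abs_le.mp (hbd x x₀); linarith [this.2]
  have hlb : ∀ x, g x₀ - B₀ ≤ g x := fun x => by
    have := abs_le.mp (hbd x x₀); linarith [this.1]
  have hRne : (Set.range g).Nonempty := ⟨g x₀, Set.mem_range_self x₀⟩
  have hbdd_above : BddAbove (Set.range g) := ⟨g x₀ + B₀, by rintro _ ⟨x, rfl⟩; exact hub x⟩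
  have hbdd_below : BddBelow (Set.range g) := ⟨g x₀ - B₀, by rintro _ ⟨x, rfl⟩; exact hlb x⟩
  set a : ℝ := sInf (Set.range g) - m with ha
  set b : ℝ := sSup (Set.range g) - m with hb
  clear_value a b
  have hba : b - a ≤ B₀ := by
    rw [ha, hb]
    have : sSup (Set.range g) ≤ sInf (Set.range g) + B₀ := by
      apply csSup_le hRne
      rintro _ ⟨x, rfl⟩
      have : g x - B₀ ≤ sInf (Set.range g) := by
        apply le_csInf hRne
        rintro _ ⟨y, rfl⟩
        have := abs_le.mp (hbd x y); linarith [this.2]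
      linarith
    linarith
  set Y : ℕ → Ω → ℝ := fun k ω => g (X k ω) - m with hY
  clear_value Y
  have hYmeas : ∀ k, Measurable (Y k) := fun k => by
    rw [hY]; exact (hg.comp (hXmeas k)).sub_const m
  have hYmem : ∀ k ω, Y k ω ∈ Set.Icc a b := by
    intro k ω
    constructor
    · rw [ha]
      have : sInf (Set.range g) ≤ g (X k ω) := csInf_le hbdd_below (Set.mem_range_self _)
      simp only [hY]; linarith
    · rw [hb]
      have : g (X k ω) ≤ sSup (Set.range g) := le_csSup hbdd_above (Set.mem_range_self _)
      simp only [hY]; linarith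
  have hYint : ∀ k, Integrable (Y k) Pr := by
    intro k
    refine ⟨(hYmeas k).aestronglyMeasurable, ?_⟩
    refine HasFiniteIntegral.of_bounded (C := max |a| |b|) (ae_of_all _ fun ω => ?_)
    rw [Real.norm_eq_abs, abs_le]
    refine ⟨?_, ?_⟩
    · have := (hYmem k ω).1
      have := neg_abs_le a
      have := le_max_left |a| |b|; linarith
    · have := (hYmem k ω).2
      have := le_abs_self b
      have := le_max_right |a| |b|; linarith
  have hYmean : ∀ k, 1 ≤ k → ∫ ω, Y k ω ∂Pr = 0 := by
    intro k hk
    have hid : IdentDistrib (fun ω => g (X k ω)) (fun ω => g (X 1 ω)) Pr Pr :=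
      (hident k hk).comp hg
    have : ∫ ω, g (X k ω) ∂Pr = ∫ ω, g (X 1 ω) ∂Pr := hid.integral_eq
    have hint : Integrable (fun ω => g (X k ω)) Pr := (hYint k).add (integrable_const m) |>.congr
      (ae_of_all _ fun ω => by simp [hY])
    rw [hY]
    simp only
    rw [integral_sub hint (integrable_const m), this, ← hm, integral_const]
    simp
  -- independence of the Y k
  have hYindep : iIndepFun Y Pr := by
    rw [hY]
    have := hindep.comp (g := fun (_ : ℕ) (x : 𝒳) => g x - m) (fun i => hg.sub_const m)
    exact this
  set l : ℝ := 4 * ε / B₀ ^ 2 with hl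
  have hl0 : 0 ≤ l := by rw [hl]; positivity
  clear_value l
  -- integrability of exp (l * Y k)
  have hexpint : ∀ k, Integrable (fun ω => exp (l * Y k ω)) Pr := by
    intro k
    refine ⟨(measurable_exp.comp ((hYmeas k).const_mul l)).aestronglyMeasurable, ?_⟩
    refine HasFiniteIntegral.of_bounded (C := exp (l * b)) (ae_of_all _ fun ω => ?_)
    rw [Real.norm_eq_abs, abs_of_pos (exp_pos _)]
    exact exp_le_exp.mpr (mul_le_mul_of_nonneg_left (hYmem k ω).2 hl0)
  -- mgf bound for each Y k
  have hmgf : ∀ k, 1 ≤ k → mgf (Y k) Pr l ≤ exp (l ^ 2 * B₀ ^ 2 / 8) := by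
    intro k hk
    calc mgf (Y k) Pr l ≤ exp (l ^ 2 * (b - a) ^ 2 / 8) :=
          lemB Pr (Y k) (hYmeas k) (hYmem k) (hYmean k hk) l
      _ ≤ exp (l ^ 2 * B₀ ^ 2 / 8) := by
          apply exp_le_exp.mpr
          have h1 : (b - a) ^ 2 ≤ B₀ ^ 2 := by
            have h0 : 0 ≤ b - a := sub_nonneg.mpr (le_trans (hYmem 1 ω₀).1 (hYmem 1 ω₀).2)
            nlinarith
          have := mul_le_mul_of_nonneg_left h1 (sq_nonneg l)
          linarith
  -- Chernoff
  have hS : Integrable (fun ω => exp (l * (∑ k ∈ Finset.Icc 1 t, Y k) ω)) Pr :=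
    hYindep.integrable_exp_mul_sum hYmeas (fun k _ => hexpint k)
  have hcher := measure_ge_le_exp_mul_mgf (μ := Pr) (X := ∑ k ∈ Finset.Icc 1 t, Y k)
    ((t : ℝ) * ε) hl0 hS
  rw [hYindep.mgf_sum hYmeas] at hcher
  have hprod : ∏ k ∈ Finset.Icc 1 t, mgf (Y k) Pr l ≤ exp ((t : ℝ) * (l ^ 2 * B₀ ^ 2 / 8)) := by
    calc ∏ k ∈ Finset.Icc 1 t, mgf (Y k) Pr l
        ≤ ∏ k ∈ Finset.Icc 1 t, exp (l ^ 2 * B₀ ^ 2 / 8) := by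
          apply Finset.prod_le_prod (fun k _ => mgf_nonneg) (fun k hk => hmgf k (Finset.mem_Icc.mp hk).1)
      _ = exp ((t : ℝ) * (l ^ 2 * B₀ ^ 2 / 8)) := by
          rw [Finset.prod_const, ← Real.exp_nat_mul, Nat.card_Icc]
          simp
  have hfinal : (Pr {ω | (t:ℝ) * ε ≤ (∑ k ∈ Finset.Icc 1 t, Y k) ω}).toReal
      ≤ exp (-2 * t * ε ^ 2 / B₀ ^ 2) := by
    calc (Pr {ω | (t:ℝ) * ε ≤ (∑ k ∈ Finset.Icc 1 t, Y k) ω}).toReal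
        ≤ exp (-l * ((t:ℝ) * ε)) * ∏ k ∈ Finset.Icc 1 t, mgf (Y k) Pr l := hcher
      _ ≤ exp (-l * ((t:ℝ) * ε)) * exp ((t : ℝ) * (l ^ 2 * B₀ ^ 2 / 8)) :=
          mul_le_mul_of_nonneg_left hprod (exp_pos _).le
      _ = exp (-2 * t * ε ^ 2 / B₀ ^ 2) := by
          rw [← Real.exp_add]
          congr 1
          rw [hl]
          field_simp
          ring
  have hset : {ω | (t : ℝ) * ε ≤ ∑ k ∈ Finset.Icc 1 t, (g (X k ω) - m)}
      = {ω | (t:ℝ) * ε ≤ (∑ k ∈ Finset.Icc 1 t, Y k) ω} := by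
    ext ω; simp [hY]
  rw [hset]
  rw [ENNReal.le_ofReal_iff_toReal_le (measure_ne_top _ _) (exp_pos _).le]
  exact hfinal

/-- The expected number of epochs in which Epoch-LPSM finds a non-optimal policy is
at most `(1 + A) S Σ_{k=1}^∞ exp(−c n₀ η^{k−1})`, with `c = Δ₁²/(2B₀²)`, and this
series converges. -/
theorem epoch_lpsm_expected_nonoptimal_epochs
    {Ω : Type*} [MeasurableSpace Ω] (Pr : Measure Ω) [IsProbabilityMeasure Pr]
    {𝒳 : Type*} [MeasurableSpace 𝒳]
    (X : ℕ → Ω → 𝒳) (hXmeas : ∀ k, Measurable (X k))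
    (hindep : iIndepFun X Pr)
    (hident : ∀ k, 1 ≤ k → IdentDistrib (X k) (X 1) Pr Pr)
    {𝒮 𝒜 : Type*} [Fintype 𝒮] [Fintype 𝒜] [Nonempty 𝒮] [Nonempty 𝒜]
    (f : 𝒮 → 𝒜 → 𝒳 → ℝ) (hfmeas : ∀ s a, Measurable (f s a))
    (B₀ : ℝ) (hB₀ : 0 < B₀)
    (hbd : ∀ s a x y, |f s a x - f s a y| ≤ B₀)
    (μ : 𝒮 → 𝒜 → ℝ) (hμ : ∀ s a, μ s a = ∫ ω, f s a (X 1 ω) ∂Pr)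
    (θ : ℕ → Ω → 𝒮 → 𝒜 → ℝ)
    (hθ : ∀ t ω s a, θ t ω s a = (∑ k ∈ Finset.Icc 1 t, f s a (X k ω)) / t)
    (𝓑 : Finset ((𝒮 → 𝒜) × (𝒮 → ℝ)))
    (hπ : ∀ β ∈ 𝓑, (∀ s, 0 ≤ β.2 s) ∧ ∑ s, β.2 s = 1)
    (ρ : ((𝒮 → 𝒜) × (𝒮 → ℝ)) → (𝒮 → 𝒜 → ℝ) → ℝ)
    (hρ : ∀ β Θ, ρ β Θ = ∑ s, β.2 s * Θ s (β.1 s))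
    (βs : (𝒮 → 𝒜) × (𝒮 → ℝ)) (hβs : βs ∈ 𝓑)
    (Δ₁ : ℝ) (hΔ₁ : 0 < Δ₁)
    (hgap : ∀ β ∈ 𝓑, β ≠ βs → ρ β μ + Δ₁ ≤ ρ βs μ)
    (F : ℕ → Set Ω)
    (hF : ∀ t, F t = {ω | ∃ β ∈ 𝓑, β ≠ βs ∧ ρ βs (θ t ω) ≤ ρ β (θ t ω)})
    (n₀ η : ℕ) (hn₀ : 1 ≤ n₀) (hη : 2 ≤ η) :
    Summable (fun k : ℕ =>
        Real.exp (-(Δ₁ ^ 2 / (2 * B₀ ^ 2)) * n₀ * (η : ℝ) ^ k)) ∧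
      ∫⁻ ω, (∑' k : ℕ, (F (n₀ * η ^ k)).indicator (fun _ => (1 : ℝ≥0∞)) ω) ∂Pr
        ≤ ENNReal.ofReal ((1 + (Fintype.card 𝒜 : ℝ)) * (Fintype.card 𝒮 : ℝ) *
            ∑' k : ℕ, Real.exp (-(Δ₁ ^ 2 / (2 * B₀ ^ 2)) * n₀ * (η : ℝ) ^ k)) := by
  have hcpos : (0:ℝ) < Δ₁ ^ 2 / (2 * B₀ ^ 2) := by positivity
  -- Summability
  have hsum : Summable (fun k : ℕ =>
      Real.exp (-(Δ₁ ^ 2 / (2 * B₀ ^ 2)) * n₀ * (η : ℝ) ^ k)) := by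
    have hr1 : Real.exp (-(Δ₁ ^ 2 / (2 * B₀ ^ 2)) * n₀) < 1 := by
      rw [Real.exp_lt_one_iff]
      have : (0:ℝ) < (n₀:ℝ) := by exact_mod_cast hn₀
      nlinarith
    refine Summable.of_nonneg_of_le (fun k => (Real.exp_pos _).le) (fun k => ?_)
      (summable_geometric_of_lt_one (Real.exp_pos _).le hr1)
    rw [← Real.exp_nat_mul]
    apply Real.exp_le_exp.mpr
    have hk : (k:ℝ) ≤ (η:ℝ) ^ k := by
      have h1 : k < 2 ^ k := Nat.lt_two_pow_self
      have h2 : 2 ^ k ≤ η ^ k := Nat.pow_le_pow_left hη k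
      exact_mod_cast le_of_lt (lt_of_lt_of_le h1 h2)
    have hn : (0:ℝ) ≤ Δ₁ ^ 2 / (2 * B₀ ^ 2) * n₀ := by positivity
    have := mul_le_mul_of_nonneg_left hk hn
    nlinarith
  refine ⟨hsum, ?_⟩
  -- measurability
  have hθmeas : ∀ t s a, Measurable (fun ω => θ t ω s a) := by
    intro t s a
    have : (fun ω => θ t ω s a)
        = fun ω => (∑ k ∈ Finset.Icc 1 t, f s a (X k ω)) / t := by
      funext ω; exact hθ t ω s a
    rw [this]
    exact (Finset.measurable_sum _ fun k _ => (hfmeas s a).comp (hXmeas k)).div_const _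
  have hρmeas : ∀ t β, Measurable (fun ω => ρ β (θ t ω)) := by
    intro t β
    have : (fun ω => ρ β (θ t ω)) = fun ω => ∑ s, β.2 s * θ t ω s (β.1 s) := by
      funext ω; exact hρ β (θ t ω)
    rw [this]
    exact Finset.measurable_sum _ fun s _ => (hθmeas t s (β.1 s)).const_mul _
  have hFmeas : ∀ t, MeasurableSet (F t) := by
    intro t
    rw [hF]
    have : {ω | ∃ β ∈ 𝓑, β ≠ βs ∧ ρ βs (θ t ω) ≤ ρ β (θ t ω)}
        = ⋃ β ∈ 𝓑, ⋃ (_ : β ≠ βs), {ω | ρ βs (θ t ω) ≤ ρ β (θ t ω)} := by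
      ext ω; simp; tauto
    rw [this]
    exact MeasurableSet.biUnion 𝓑.countable_toSet fun β _ =>
      MeasurableSet.iUnion fun _ => measurableSet_le (hρmeas t βs) (hρmeas t β)
  -- key per-epoch bound
  have hexpo : ∀ t : ℕ, -2 * (t:ℝ) * (Δ₁/2) ^ 2 / B₀ ^ 2 = -(Δ₁ ^ 2 / (2 * B₀ ^ 2)) * t := by
    intro t; field_simp
  have key : ∀ t : ℕ, 1 ≤ t → Pr (F t) ≤
      ENNReal.ofReal ((1 + (Fintype.card 𝒜 : ℝ)) * (Fintype.card 𝒮 : ℝ) *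
        Real.exp (-(Δ₁ ^ 2 / (2 * B₀ ^ 2)) * t)) := by
    intro t ht
    have htpos : (0:ℝ) < t := by exact_mod_cast ht
    -- the two families of bad events
    have hb2 : ∀ s a, Pr {ω | (t:ℝ) * (Δ₁/2)
          ≤ ∑ k ∈ Finset.Icc 1 t, (f s a (X k ω) - μ s a)}
        ≤ ENNReal.ofReal (Real.exp (-(Δ₁ ^ 2 / (2 * B₀ ^ 2)) * t)) := by
      intro s a
      have := lemC Pr X hXmeas hindep hident (f s a) (hfmeas s a) B₀ hB₀ (hbd s a)
        (μ s a) (hμ s a) t (Δ₁/2) (by positivity)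
      rwa [hexpo t] at this
    have hb1 : ∀ s : 𝒮, Pr {ω | (t:ℝ) * (Δ₁/2)
          ≤ ∑ k ∈ Finset.Icc 1 t, (-(f s (βs.1 s) (X k ω)) - -(μ s (βs.1 s)))}
        ≤ ENNReal.ofReal (Real.exp (-(Δ₁ ^ 2 / (2 * B₀ ^ 2)) * t)) := by
      intro s
      have hbd' : ∀ x y, |(fun x => -(f s (βs.1 s) x)) x - (fun x => -(f s (βs.1 s) x)) y| ≤ B₀ := by
        intro x y
        simp only [neg_sub_neg]
        rw [abs_sub_comm]
        exact hbd s (βs.1 s) x y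
      have hm' : -(μ s (βs.1 s)) = ∫ ω, (fun x => -(f s (βs.1 s) x)) (X 1 ω) ∂Pr := by
        simp only
        rw [integral_neg, ← hμ]
      have := lemC Pr X hXmeas hindep hident (fun x => -(f s (βs.1 s) x))
        ((hfmeas s (βs.1 s)).neg) B₀ hB₀ hbd' (-(μ s (βs.1 s))) hm' t (Δ₁/2) (by positivity)
      rwa [hexpo t] at this
    -- inclusion
    have hsub : F t ⊆ (⋃ s : 𝒮, {ω | (t:ℝ) * (Δ₁/2)
          ≤ ∑ k ∈ Finset.Icc 1 t, (-(f s (βs.1 s) (X k ω)) - -(μ s (βs.1 s)))})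
        ∪ ⋃ s : 𝒮, ⋃ a : 𝒜, {ω | (t:ℝ) * (Δ₁/2)
          ≤ ∑ k ∈ Finset.Icc 1 t, (f s a (X k ω) - μ s a)} := by
      intro ω hω
      rw [hF] at hω
      obtain ⟨β, hβ𝓑, hβne, hρle⟩ := hω
      have hgapβ := hgap β hβ𝓑 hβne
      have hsum_f : ∀ s a, ∑ k ∈ Finset.Icc 1 t, f s a (X k ω) = (t:ℝ) * θ t ω s a := by
        intro s a
        rw [hθ t ω s a, mul_div_cancel₀ _ htpos.ne']
      have hcard : (Finset.Icc 1 t).card = t := by rw [Nat.card_Icc]; omega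
      rcases le_or_gt (Δ₁/2) (ρ β (θ t ω) - ρ β μ) with hcase | hcase
      · -- some (s, β.1 s) over-estimated
        right
        have hd : ∑ s, β.2 s * (θ t ω s (β.1 s) - μ s (β.1 s)) = ρ β (θ t ω) - ρ β μ := by
          rw [hρ, hρ, ← Finset.sum_sub_distrib]
          exact Finset.sum_congr rfl fun s _ => by ring
        obtain ⟨s₀, _, hs₀⟩ := Finset.exists_max_image Finset.univ
          (fun s => θ t ω s (β.1 s) - μ s (β.1 s)) Finset.univ_nonempty
        have hle : ∑ s, β.2 s * (θ t ω s (β.1 s) - μ s (β.1 s))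
            ≤ θ t ω s₀ (β.1 s₀) - μ s₀ (β.1 s₀) := by
          calc ∑ s, β.2 s * (θ t ω s (β.1 s) - μ s (β.1 s))
              ≤ ∑ s, β.2 s * (θ t ω s₀ (β.1 s₀) - μ s₀ (β.1 s₀)) :=
                Finset.sum_le_sum fun s _ =>
                  mul_le_mul_of_nonneg_left (hs₀ s (Finset.mem_univ s)) ((hπ β hβ𝓑).1 s)
            _ = θ t ω s₀ (β.1 s₀) - μ s₀ (β.1 s₀) := by
                rw [← Finset.sum_mul, (hπ β hβ𝓑).2, one_mul]
        have hdev : Δ₁/2 ≤ θ t ω s₀ (β.1 s₀) - μ s₀ (β.1 s₀) := by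
          rw [hd] at hle; linarith
        refine Set.mem_iUnion.mpr ⟨s₀, Set.mem_iUnion.mpr ⟨β.1 s₀, ?_⟩⟩
        show (t:ℝ) * (Δ₁/2) ≤ _
        rw [Finset.sum_sub_distrib, Finset.sum_const, hcard, hsum_f, nsmul_eq_mul]
        nlinarith
      · -- βs under-estimated at some s
        left
        have hcase' : Δ₁/2 ≤ ρ βs μ - ρ βs (θ t ω) := by linarith
        have hd : ∑ s, βs.2 s * (μ s (βs.1 s) - θ t ω s (βs.1 s)) = ρ βs μ - ρ βs (θ t ω) := by
          rw [hρ, hρ, ← Finset.sum_sub_distrib]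
          exact Finset.sum_congr rfl fun s _ => by ring
        obtain ⟨s₀, _, hs₀⟩ := Finset.exists_max_image Finset.univ
          (fun s => μ s (βs.1 s) - θ t ω s (βs.1 s)) Finset.univ_nonempty
        have hle : ∑ s, βs.2 s * (μ s (βs.1 s) - θ t ω s (βs.1 s))
            ≤ μ s₀ (βs.1 s₀) - θ t ω s₀ (βs.1 s₀) := by
          calc ∑ s, βs.2 s * (μ s (βs.1 s) - θ t ω s (βs.1 s))
              ≤ ∑ s, βs.2 s * (μ s₀ (βs.1 s₀) - θ t ω s₀ (βs.1 s₀)) :=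
                Finset.sum_le_sum fun s _ =>
                  mul_le_mul_of_nonneg_left (hs₀ s (Finset.mem_univ s)) ((hπ βs hβs).1 s)
            _ = μ s₀ (βs.1 s₀) - θ t ω s₀ (βs.1 s₀) := by
                rw [← Finset.sum_mul, (hπ βs hβs).2, one_mul]
        have hdev : Δ₁/2 ≤ μ s₀ (βs.1 s₀) - θ t ω s₀ (βs.1 s₀) := by
          rw [hd] at hle; linarith
        refine Set.mem_iUnion.mpr ⟨s₀, ?_⟩
        show (t:ℝ) * (Δ₁/2) ≤ _
        rw [Finset.sum_sub_distrib, Finset.sum_const, hcard]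
        simp only [Finset.sum_neg_distrib, nsmul_eq_mul]
        rw [hsum_f]
        nlinarith
    -- union bound
    set E : ℝ≥0∞ := ENNReal.ofReal (Real.exp (-(Δ₁ ^ 2 / (2 * B₀ ^ 2)) * t)) with hE
    calc Pr (F t) ≤ Pr ((⋃ s : 𝒮, {ω | (t:ℝ) * (Δ₁/2)
          ≤ ∑ k ∈ Finset.Icc 1 t, (-(f s (βs.1 s) (X k ω)) - -(μ s (βs.1 s)))})
        ∪ ⋃ s : 𝒮, ⋃ a : 𝒜, {ω | (t:ℝ) * (Δ₁/2)
          ≤ ∑ k ∈ Finset.Icc 1 t, (f s a (X k ω) - μ s a)}) := measure_mono hsub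
      _ ≤ Pr (⋃ s : 𝒮, {ω | (t:ℝ) * (Δ₁/2)
          ≤ ∑ k ∈ Finset.Icc 1 t, (-(f s (βs.1 s) (X k ω)) - -(μ s (βs.1 s)))})
          + Pr (⋃ s : 𝒮, ⋃ a : 𝒜, {ω | (t:ℝ) * (Δ₁/2)
          ≤ ∑ k ∈ Finset.Icc 1 t, (f s a (X k ω) - μ s a)}) := measure_union_le _ _
      _ ≤ (∑ _s : 𝒮, E) + ∑ s : 𝒮, ∑ _a : 𝒜, E := by
          gcongr
          · exact le_trans (measure_iUnion_fintype_le _ _)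
              (Finset.sum_le_sum fun s _ => hb1 s)
          · refine le_trans (measure_iUnion_fintype_le _ _)
              (Finset.sum_le_sum fun s _ => ?_)
            exact le_trans (measure_iUnion_fintype_le _ _)
              (Finset.sum_le_sum fun a _ => hb2 s a)
      _ = ((Fintype.card 𝒮 : ℝ≥0∞) + (Fintype.card 𝒮 : ℝ≥0∞) * (Fintype.card 𝒜 : ℝ≥0∞)) * E := by
          simp [Finset.sum_const, Finset.card_univ, nsmul_eq_mul]
          ring
      _ = ENNReal.ofReal ((1 + (Fintype.card 𝒜 : ℝ)) * (Fintype.card 𝒮 : ℝ) *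
            Real.exp (-(Δ₁ ^ 2 / (2 * B₀ ^ 2)) * t)) := by
          rw [hE, ENNReal.ofReal_mul (by positivity), ENNReal.ofReal_mul (by positivity),
            ENNReal.ofReal_add (by norm_num) (by positivity), ENNReal.ofReal_one,
            ENNReal.ofReal_natCast, ENNReal.ofReal_natCast]
          ring
  -- Tonelli and summation
  rw [lintegral_tsum (fun k => (measurable_const.indicator (hFmeas _)).aemeasurable)]
  have hind : ∀ k : ℕ, ∫⁻ ω, (F (n₀ * η ^ k)).indicator (fun _ => (1:ℝ≥0∞)) ω ∂Pr
      = Pr (F (n₀ * η ^ k)) := by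
    intro k
    exact lintegral_indicator_one (hFmeas _)
  simp_rw [hind]
  have htk : ∀ k : ℕ, 1 ≤ n₀ * η ^ k := fun k =>
    Nat.one_le_iff_ne_zero.mpr (Nat.mul_ne_zero (by omega) (pow_ne_zero k (by omega)))
  calc ∑' k : ℕ, Pr (F (n₀ * η ^ k))
      ≤ ∑' k : ℕ, ENNReal.ofReal ((1 + (Fintype.card 𝒜 : ℝ)) * (Fintype.card 𝒮 : ℝ) *
          Real.exp (-(Δ₁ ^ 2 / (2 * B₀ ^ 2)) * n₀ * (η : ℝ) ^ k)) := by
        refine ENNReal.tsum_le_tsum fun k => ?_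
        have := key (n₀ * η ^ k) (htk k)
        have hcast : (-(Δ₁ ^ 2 / (2 * B₀ ^ 2)) * ((n₀ * η ^ k : ℕ) : ℝ))
            = -(Δ₁ ^ 2 / (2 * B₀ ^ 2)) * n₀ * (η : ℝ) ^ k := by
          push_cast; ring
        rwa [hcast] at this
    _ = ENNReal.ofReal ((1 + (Fintype.card 𝒜 : ℝ)) * (Fintype.card 𝒮 : ℝ) *
          ∑' k : ℕ, Real.exp (-(Δ₁ ^ 2 / (2 * B₀ ^ 2)) * n₀ * (η : ℝ) ^ k)) := by
        rw [← ENNReal.ofReal_tsum_of_nonneg (fun k => by positivity) (hsum.mul_left _)]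
        rw [tsum_mul_left]
end
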